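/- arXiv:1701.03429 — 7 statements merged into one kernel-verified Lean document; each statement's English description precedes it below -/
import Mathlib

section
/- If $a$ and $b$ are holomorphic functions on a domain in the complex plane, then the function $\log(|a(z)|^2 + |b(z)|^2)$ is subharmonic on the set where $|a|^2+|b|^2 > 0$. -/
/-!
At a point `z` with `F z ≠ 0`, Cauchy–Schwarz gives `‖⟪F z, F w⟫‖² ≤ ‖F z‖² ‖F w‖²`, with
equality at `w = z`. Hence `log ‖F‖²` minus the harmonic function `log ‖⟪F z, F ·⟫‖²` has a local
minimum at `z`, where its second derivative along every line, and so its Laplacian, is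
nonnegative. Take `F = (a, b) : ℂ → ℂ²`.
-/

open Complex Metric

/-- The planar Laplacian `Δ G = ∂²G/∂x² + ∂²G/∂y²` of a function `G : ℂ → ℝ`,
computed at a point `z` via second derivatives along the real and imaginary directions. -/
noncomputable def planarLaplacian (G : ℂ → ℝ) (z : ℂ) : ℝ :=
  deriv (deriv fun x : ℝ => G (z + x)) 0 + deriv (deriv fun y : ℝ => G (z + y * Complex.I)) 0

open Filter Topology InnerProductSpace Laplacian

theorem IsLocalMin.deriv_deriv_nonneg {f : ℝ → ℝ} {x₀ : ℝ} (hmin : IsLocalMin f x₀)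
    (hc : ContinuousAt f x₀) : 0 ≤ deriv (deriv f) x₀ := by
  by_contra! hneg
  have hmax := isLocalMax_of_deriv_deriv_neg hneg hmin.deriv_eq_zero hc
  have hconst : f =ᶠ[𝓝 x₀] fun _ => f x₀ :=
    (hmin.and hmax).mono fun x hx => le_antisymm hx.2 hx.1
  have hderiv : deriv f =ᶠ[𝓝 x₀] fun _ => 0 :=
    hconst.eventuallyEq_nhds.mono fun x hx => by rw [hx.deriv_eq, deriv_const]
  simp [hderiv.deriv_eq] at hneg

theorem deriv_deriv_comp_add_smul {E F : Type*} [NormedAddCommGroup E] [NormedSpace ℝ E]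
    [NormedAddCommGroup F] [NormedSpace ℝ F] {G : E → F} {z : E} (hG : ContDiffAt ℝ 2 G z)
    (v : E) : deriv (deriv fun t : ℝ => G (z + t • v)) 0 = iteratedFDeriv ℝ 2 G z ![v, v] := by
  have hline : ∀ t : ℝ, HasDerivAt (fun t : ℝ => z + t • v) v t := fun t => by
    simpa using ((hasDerivAt_id t).smul_const v).const_add z
  have hdiff : ∀ᶠ t in 𝓝 (0 : ℝ), DifferentiableAt ℝ G (z + t • v) := by
    have hz : Tendsto (fun t : ℝ => z + t • v) (𝓝 0) (𝓝 z) := by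
      simpa using (hline 0).continuousAt.tendsto
    exact hz.eventually ((hG.eventually (by simp)).mono fun y hy => hy.differentiableAt (by simp))
  have hfirst : deriv (fun t : ℝ => G (z + t • v)) =ᶠ[𝓝 0] fun t => fderiv ℝ G (z + t • v) v :=
    hdiff.mono fun t ht => (ht.hasFDerivAt.comp_hasDerivAt t (hline t)).deriv
  have hG' : DifferentiableAt ℝ (fderiv ℝ G) z :=
    (hG.fderiv_right (m := 1) (by norm_num)).differentiableAt (by simp)
  have hsecond : HasDerivAt (fun t : ℝ => fderiv ℝ G (z + t • v) v)
      (fderiv ℝ (fderiv ℝ G) z v v) 0 := by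
    simpa using (hG'.hasFDerivAt.comp_hasDerivAt_of_eq (0 : ℝ) (hline 0) (by simp)).clm_apply
      (hasDerivAt_const 0 v)
  rw [hfirst.deriv_eq, hsecond.deriv, iteratedFDeriv_two_apply]
  simp

theorem planarLaplacian_eq_laplacian {G : ℂ → ℝ} {z : ℂ} (hG : ContDiffAt ℝ 2 G z) :
    planarLaplacian G z = Δ G z := by
  have h1 := deriv_deriv_comp_add_smul hG 1
  have hI := deriv_deriv_comp_add_smul hG I
  simp only [Complex.real_smul, mul_one] at h1 hI
  rw [planarLaplacian, h1, hI, laplacian_eq_iteratedFDeriv_complexPlane]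

theorem planarLaplacian_nonneg_of_isLocalMin {G : ℂ → ℝ} {z : ℂ} (hmin : IsLocalMin G z)
    (hc : ContinuousAt G z) : 0 ≤ planarLaplacian G z := by
  have hline : ∀ v : ℂ, 0 ≤ deriv (deriv fun t : ℝ => G (z + t * v)) 0 := fun v => by
    have hℓ : ContinuousAt (fun t : ℝ => z + t * v) 0 := by fun_prop
    have hz : z + ((0 : ℝ) : ℂ) * v = z := by simp
    rw [← hz] at hmin hc
    exact (hmin.comp_continuous (g := fun t : ℝ => z + t * v) hℓ).deriv_deriv_nonneg
      (hc.comp (f := fun t : ℝ => z + t * v) hℓ)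
  simpa [planarLaplacian] using add_nonneg (hline 1) (hline I)

theorem planarLaplacian_nonneg_of_isLocalMin_sub_harmonicAt {u h : ℂ → ℝ} {z : ℂ}
    (hu : ContDiffAt ℝ 2 u z) (hh : HarmonicAt h z) (hmin : IsLocalMin (u - h) z) :
    0 ≤ planarLaplacian u z := by
  have hsub := planarLaplacian_nonneg_of_isLocalMin hmin (hu.continuousAt.sub hh.1.continuousAt)
  rwa [planarLaplacian_eq_laplacian (G := u - h) (hu.sub hh.1), hu.laplacian_sub hh.1,
    hh.2.self_of_nhds, Pi.zero_apply, sub_zero, ← planarLaplacian_eq_laplacian hu] at hsub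

section InnerProductSpace

variable {E : Type*} [NormedAddCommGroup E] [InnerProductSpace ℂ E] {F : ℂ → E} {z : ℂ}

theorem isLocalMin_log_norm_sq_sub_log_norm_inner_sq (hF : ContinuousAt F z) (hz : F z ≠ 0) :
    IsLocalMin (fun w => Real.log (‖F w‖ ^ 2) - Real.log (‖inner ℂ (F z) (F w)‖ ^ 2)) z := by
  have hφ : ContinuousAt (fun w => inner ℂ (F z) (F w)) z := by fun_prop
  filter_upwards [hφ.eventually_ne (inner_self_ne_zero.2 hz)] with w hw
  have hFw : F w ≠ 0 := by rintro h; simp [h] at hw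
  have hcs : ‖inner ℂ (F z) (F w)‖ ^ 2 ≤ ‖F z‖ ^ 2 * ‖F w‖ ^ 2 := by
    rw [← mul_pow]
    gcongr
    exact norm_inner_le_norm _ _
  have hlog := Real.log_le_log (by positivity) hcs
  rw [Real.log_mul (by positivity) (by positivity)] at hlog
  have hzz : ‖inner ℂ (F z) (F z)‖ ^ 2 = (‖F z‖ ^ 2) ^ 2 := by
    rw [inner_self_eq_norm_sq_to_K]
    norm_cast
    simp
  rw [hzz, Real.log_pow (‖F z‖ ^ 2) 2]
  push_cast
  linarith

theorem planarLaplacian_log_norm_sq_nonneg [CompleteSpace E] (hF : AnalyticAt ℂ F z)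
    (hz : F z ≠ 0) : 0 ≤ planarLaplacian (fun w => Real.log (‖F w‖ ^ 2)) z := by
  have hφ : AnalyticAt ℂ (fun w => inner ℂ (F z) (F w)) z :=
    (innerSL ℂ (F z)).analyticAt _ |>.comp hF
  have hu : ContDiffAt ℝ 2 (fun w => Real.log (‖F w‖ ^ 2)) z :=
    ((hF.contDiffAt.restrict_scalars ℝ).norm_sq ℂ).log (by positivity)
  have hh : HarmonicAt (fun w => Real.log (‖inner ℂ (F z) (F w)‖ ^ 2)) z := by
    convert (hφ.harmonicAt_log_norm (inner_self_ne_zero.2 hz)).const_smul (c := (2 : ℝ)) using 1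
    ext w
    simp [Real.log_pow]
  exact planarLaplacian_nonneg_of_isLocalMin_sub_harmonicAt hu hh
    (isLocalMin_log_norm_sq_sub_log_norm_inner_sq hF.continuousAt hz)

end InnerProductSpace

/-- If `a`, `b` are holomorphic on an open domain `Ω ⊆ ℂ`, then
`log (|a|² + |b|²)` is subharmonic (`Δ ≥ 0`) on the set where `|a|² + |b|² > 0`. -/
theorem log_sq_add_sq_subharmonic (Ω : Set ℂ) (hΩ : IsOpen Ω) (a b : ℂ → ℂ)
    (ha : DifferentiableOn ℂ a Ω) (hb : DifferentiableOn ℂ b Ω) :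
    ∀ z ∈ Ω, ‖a z‖ ^ 2 + ‖b z‖ ^ 2 > 0 →
      0 ≤ planarLaplacian (fun w => Real.log (‖a w‖ ^ 2 + ‖b w‖ ^ 2)) z := by
  intro z hz hpos
  let F : ℂ → EuclideanSpace ℂ (Fin 2) := fun w => !₂[a w, b w]
  have hnorm : ∀ w, ‖F w‖ ^ 2 = ‖a w‖ ^ 2 + ‖b w‖ ^ 2 := fun w => by
    simp [F, EuclideanSpace.norm_sq_eq, Fin.sum_univ_two]
  have hF : AnalyticAt ℂ F z := by
    refine (EuclideanSpace.equiv (Fin 2) ℂ).symm.analyticAt _ |>.comp ?_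
    rw [analyticAt_pi_iff, Fin.forall_fin_two]
    exact ⟨ha.analyticOnNhd hΩ z hz, hb.analyticOnNhd hΩ z hz⟩
  have hFz : F z ≠ 0 := by
    intro h0
    have := hnorm z
    rw [h0, norm_zero] at this
    linarith
  simpa only [hnorm] using planarLaplacian_log_norm_sq_nonneg hF hFz
end

section
/- Let $f$ be holomorphic on the unit disk, $p > 1$, $q = p/(p-1)$, and $\epsilon > 0$. Then $\Delta\big((q\epsilon + |f|^2)^{p/2}\big) = p(q\epsilon + |f|^2)^{p/2-2}(2q\epsilon + p|f|^2)|f'|^2$. -/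
/-!
For `φ` twice differentiable and `f` holomorphic,
`Δ (φ ∘ ‖f‖²) = 4 ‖f'‖² (φ''(‖f‖²) ‖f‖² + φ'(‖f‖²))`. Indeed, along the line `t ↦ z + t e` the
function `‖f‖²` has first derivative `2 ⟪f, e f'⟫` and second derivative `2 (‖e f'‖² + ⟪f, e² f''⟫)`;
summing over `e = 1` and `e = I`, the `f''` terms cancel and
`⟪f, f'⟫² + ⟪f, I f'⟫² = ‖f‖² ‖f'‖²`. Taking `φ y = (qε + y) ^ (p/2)` gives the formula.
-/

open Complex Metric

open Filter Topology

theorem hasDerivAt_deriv_comp {φ φ' u u' : ℝ → ℝ} {φ'' u'' t : ℝ}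
    (hu : ∀ᶠ s in 𝓝 t, HasDerivAt u (u' s) s) (hu' : HasDerivAt u' u'' t)
    (hφ : ∀ᶠ y in 𝓝 (u t), HasDerivAt φ (φ' y) y) (hφ' : HasDerivAt φ' φ'' (u t)) :
    HasDerivAt (deriv fun s => φ (u s)) (φ'' * u' t ^ 2 + φ' (u t) * u'') t := by
  have hu_cont : Tendsto u (𝓝 t) (𝓝 (u t)) := hu.self_of_nhds.continuousAt.tendsto
  have hderiv : deriv (fun s => φ (u s)) =ᶠ[𝓝 t] fun s => φ' (u s) * u' s := by
    filter_upwards [hu, hu_cont.eventually hφ] with s hus hφs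
    exact (hφs.comp s hus).deriv
  refine HasDerivAt.congr_of_eventuallyEq ?_ hderiv
  exact ((hφ'.comp t hu.self_of_nhds).mul hu').congr_deriv (by rw [Function.comp_apply]; ring)

section InnerProductSpace

variable {E : Type*} [NormedAddCommGroup E] [InnerProductSpace ℝ E]

theorem hasDerivAt_deriv_comp_norm_sq {φ φ' : ℝ → ℝ} {φ'' : ℝ} {g g' : ℝ → E} {g'' : E} {t : ℝ}
    (hg : ∀ᶠ s in 𝓝 t, HasDerivAt g (g' s) s) (hg' : HasDerivAt g' g'' t)
    (hφ : ∀ᶠ y in 𝓝 (‖g t‖ ^ 2), HasDerivAt φ (φ' y) y)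
    (hφ' : HasDerivAt φ' φ'' (‖g t‖ ^ 2)) :
    HasDerivAt (deriv fun s => φ (‖g s‖ ^ 2))
      (φ'' * (2 * inner ℝ (g t) (g' t)) ^ 2 +
        φ' (‖g t‖ ^ 2) * (2 * (‖g' t‖ ^ 2 + inner ℝ (g t) g''))) t := by
  refine hasDerivAt_deriv_comp (hg.mono fun s hs => hs.norm_sq) ?_ hφ hφ'
  refine ((hg.self_of_nhds.inner ℝ hg').const_mul 2).congr_deriv ?_
  rw [real_inner_self_eq_norm_sq, real_inner_comm, add_comm]

end InnerProductSpace

theorem DifferentiableAt.hasDerivAt_comp_line {f : ℂ → ℂ} {z e : ℂ} {s : ℝ}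
    (hf : DifferentiableAt ℂ f (z + s * e)) :
    HasDerivAt (fun t : ℝ => f (z + t * e)) (e * deriv f (z + s * e)) s := by
  have hline : HasDerivAt (fun t : ℝ => z + (t : ℂ) * e) e s := by
    simpa using ((hasDerivAt_id (s : ℂ)).mul_const e).const_add z |>.comp_ofReal
  simpa [Function.comp_def, mul_comm] using hf.hasDerivAt.scomp s hline

theorem AnalyticAt.eventually_hasDerivAt_comp_line {f : ℂ → ℂ} {z : ℂ} (hf : AnalyticAt ℂ f z)
    (e : ℂ) :
    ∀ᶠ s : ℝ in 𝓝 0, HasDerivAt (fun t : ℝ => f (z + t * e)) (e * deriv f (z + s * e)) s := by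
  have hline : Tendsto (fun s : ℝ => z + s * e) (𝓝 0) (𝓝 z) := by
    simpa using ((continuous_ofReal.mul continuous_const).const_add z).tendsto (0 : ℝ)
  filter_upwards [hline.eventually hf.eventually_analyticAt] with s hs
  exact hs.differentiableAt.hasDerivAt_comp_line

theorem AnalyticAt.deriv_deriv_comp_norm_sq_line {f : ℂ → ℂ} {z : ℂ} (hf : AnalyticAt ℂ f z)
    (e : ℂ) {φ φ' : ℝ → ℝ} {φ'' : ℝ} (hφ : ∀ᶠ y in 𝓝 (‖f z‖ ^ 2), HasDerivAt φ (φ' y) y)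
    (hφ' : HasDerivAt φ' φ'' (‖f z‖ ^ 2)) :
    deriv (deriv fun t : ℝ => φ (‖f (z + t * e)‖ ^ 2)) 0 =
      φ'' * (2 * inner ℝ (f z) (e * deriv f z)) ^ 2 +
        φ' (‖f z‖ ^ 2) *
          (2 * (‖e * deriv f z‖ ^ 2 + inner ℝ (f z) (e * (e * deriv (deriv f) z)))) := by
  have h := hasDerivAt_deriv_comp_norm_sq (hf.eventually_hasDerivAt_comp_line e)
    ((hf.deriv.eventually_hasDerivAt_comp_line e).self_of_nhds.const_mul e)
    (by simpa using hφ) (by simpa using hφ')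
  simpa using h.deriv

theorem Complex.real_inner_sq_add_real_inner_I_mul_sq (a b : ℂ) :
    inner ℝ a b ^ 2 + inner ℝ a (I * b) ^ 2 = ‖a‖ ^ 2 * ‖b‖ ^ 2 := by
  simp only [Complex.inner, Complex.sq_norm, normSq_apply, mul_re, mul_im, conj_re, conj_im,
    I_re, I_im]
  ring

theorem AnalyticAt.planarLaplacian_comp_norm_sq {f : ℂ → ℂ} {z : ℂ} (hf : AnalyticAt ℂ f z)
    {φ φ' : ℝ → ℝ} {φ'' : ℝ} (hφ : ∀ᶠ y in 𝓝 (‖f z‖ ^ 2), HasDerivAt φ (φ' y) y)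
    (hφ' : HasDerivAt φ' φ'' (‖f z‖ ^ 2)) :
    planarLaplacian (fun w => φ (‖f w‖ ^ 2)) z =
      4 * ‖deriv f z‖ ^ 2 * (φ'' * ‖f z‖ ^ 2 + φ' (‖f z‖ ^ 2)) := by
  have h1 := hf.deriv_deriv_comp_norm_sq_line 1 hφ hφ'
  have hI := hf.deriv_deriv_comp_norm_sq_line I hφ hφ'
  simp only [mul_one, one_mul] at h1
  rw [planarLaplacian, h1, hI, norm_mul, norm_I, one_mul, ← mul_assoc I, I_mul_I, neg_one_mul,
    inner_neg_right]
  linear_combination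
    4 * φ'' * Complex.real_inner_sq_add_real_inner_I_mul_sq (f z) (deriv f z)

theorem AnalyticAt.planarLaplacian_rpow_add_norm_sq {f : ℂ → ℂ} {z : ℂ} (hf : AnalyticAt ℂ f z)
    {c : ℝ} (hc : c + ‖f z‖ ^ 2 ≠ 0) (r : ℝ) :
    planarLaplacian (fun w => (c + ‖f w‖ ^ 2) ^ r) z =
      4 * r * (c + ‖f z‖ ^ 2) ^ (r - 2) * (c + r * ‖f z‖ ^ 2) * ‖deriv f z‖ ^ 2 := by
  have hφ : ∀ᶠ y in 𝓝 (‖f z‖ ^ 2),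
      HasDerivAt (fun y => (c + y) ^ r) (r * (c + y) ^ (r - 1)) y := by
    filter_upwards [(continuous_const_add c).continuousAt.eventually_ne hc] with y hy
    exact (Real.hasDerivAt_rpow_const (Or.inl hy)).comp_const_add c y
  have hφ' : HasDerivAt (fun y => r * (c + y) ^ (r - 1))
      (r * ((r - 1) * (c + ‖f z‖ ^ 2) ^ (r - 2))) (‖f z‖ ^ 2) := by
    have h := ((Real.hasDerivAt_rpow_const (p := r - 1) (Or.inl hc)).comp_const_add c
      (‖f z‖ ^ 2)).const_mul r
    rwa [show r - 1 - 1 = r - 2 by ring] at h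
  rw [hf.planarLaplacian_comp_norm_sq hφ hφ', show r - 1 = r - 2 + 1 by ring,
    Real.rpow_add_one hc]
  ring

/-- For `f` holomorphic on the unit disk, `p > 1`, `q = p/(p-1)`, `ε > 0`:
`Δ((qε + |f|²)^{p/2}) = p (qε + |f|²)^{p/2-2} (2qε + p|f|²) |f'|²`. -/
theorem laplacian_F_eps (f : ℂ → ℂ) (hf : DifferentiableOn ℂ f (ball (0 : ℂ) 1))
    (p q : ℝ) (hp : 1 < p) (hq : q = p / (p - 1)) (ε : ℝ) (hε : 0 < ε) :
    ∀ z ∈ ball (0 : ℂ) 1,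
      planarLaplacian (fun w => (q * ε + ‖f w‖ ^ 2) ^ (p / 2)) z =
        p * (q * ε + ‖f z‖ ^ 2) ^ (p / 2 - 2) *
          (2 * q * ε + p * ‖f z‖ ^ 2) * ‖deriv f z‖ ^ 2 := by
  intro z hz
  have hfz : AnalyticAt ℂ f z := hf.analyticAt (isOpen_ball.mem_nhds hz)
  have hq_pos : 0 < q := by
    rw [hq]
    exact div_pos (by linarith) (by linarith)
  have hqε : 0 < q * ε := mul_pos hq_pos hε
  rw [hfz.planarLaplacian_rpow_add_norm_sq (by positivity) (p / 2)]
  ring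
end

section
/- Let $f = u+iv$ be holomorphic on the unit disk, $p \geq 4$, $q = p/(p-1)$, $\epsilon > 0$. Set $F_\epsilon = (q\epsilon + |f|^2)^{p/2}$, $U_\epsilon = (\epsilon + u^2)^{p/2}$, $V_\epsilon = (\epsilon + v^2)^{p/2}$. Then $\Delta(U_\epsilon + V_\epsilon) \leq \frac{p-1}{p}\Delta F_\epsilon$ pointwise on the disk. -/
/-!
Along a coordinate line through `z` the second derivative of `f` is `f''` in the `x`-direction
and `-f''` in the `y`-direction, so these terms cancel in the Laplacian of `(c + ‖L f‖²)^{p/2}`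
for any real-linear `L`, leaving only `f` and `f'`. With `X = ε + u²`, `Y = ε + v²`,
`S = qε + |f|²` this gives `Δ F_ε = p S^{p/2-2} (2qε + p|f|²) |f'|²` and
`Δ(U_ε + V_ε) = p |f'|² (X^{p/2-2} (ε + (p-1)u²) + Y^{p/2-2} (ε + (p-1)v²))`.
As `q ≥ 1`, `X, Y ≤ S`, and `t ↦ t^{p/2-2}` is monotone because `p ≥ 4`; finally `q(p-1) = p`
turns `((p-1)/p)(2qε + p|f|²)` into `2ε + (p-1)(u² + v²)`, the sum of the two weights.
-/

open Complex Metric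

open Filter Topology RealInnerProductSpace

def HasSecondDerivAt (φ : ℝ → ℝ) (D t₀ : ℝ) : Prop :=
  ∃ φ' : ℝ → ℝ, (∀ᶠ t in 𝓝 t₀, HasDerivAt φ (φ' t) t) ∧ HasDerivAt φ' D t₀

namespace HasSecondDerivAt

variable {φ ψ : ℝ → ℝ} {D E t₀ : ℝ}

theorem add (hφ : HasSecondDerivAt φ D t₀) (hψ : HasSecondDerivAt ψ E t₀) :
    HasSecondDerivAt (fun t => φ t + ψ t) (D + E) t₀ := by
  obtain ⟨φ', hφ, hφ'⟩ := hφ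
  obtain ⟨ψ', hψ, hψ'⟩ := hψ
  exact ⟨φ' + ψ', hφ.and hψ |>.mono fun t h => h.1.add h.2, hφ'.add hψ'⟩

theorem deriv_deriv (h : HasSecondDerivAt φ D t₀) : deriv (deriv φ) t₀ = D := by
  obtain ⟨φ', hφ, hφ'⟩ := h
  have hderiv : deriv φ =ᶠ[𝓝 t₀] φ' := hφ.mono fun t h => h.deriv
  rw [hderiv.deriv_eq, hφ'.deriv]

end HasSecondDerivAt

section RpowNormSq

variable {E : Type*} [NormedAddCommGroup E] [InnerProductSpace ℝ E] {c p : ℝ}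

theorem HasDerivAt.rpow_const_add_norm_sq {g : ℝ → E} {g' : E} {t : ℝ} (hc : 0 < c)
    (hg : HasDerivAt g g' t) :
    HasDerivAt (fun s => (c + ‖g s‖ ^ 2) ^ (p / 2))
      (p * (c + ‖g t‖ ^ 2) ^ (p / 2 - 1) * ⟪g t, g'⟫) t := by
  convert (hg.norm_sq.const_add c).rpow_const (p := p / 2) (Or.inl (by positivity)) using 1
  ring

theorem hasSecondDerivAt_rpow_const_add_norm_sq {g g' : ℝ → E} {g'' : E} {t₀ : ℝ} (hc : 0 < c)
    (hg : ∀ᶠ t in 𝓝 t₀, HasDerivAt g (g' t) t) (hg' : HasDerivAt g' g'' t₀) :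
    HasSecondDerivAt (fun t => (c + ‖g t‖ ^ 2) ^ (p / 2))
      (p * (c + ‖g t₀‖ ^ 2) ^ (p / 2 - 2) *
        ((p - 2) * ⟪g t₀, g' t₀⟫ ^ 2 + (c + ‖g t₀‖ ^ 2) * (‖g' t₀‖ ^ 2 + ⟪g t₀, g''⟫))) t₀ := by
  refine ⟨fun t => p * (c + ‖g t‖ ^ 2) ^ (p / 2 - 1) * ⟪g t, g' t⟫,
    hg.mono fun t h => h.rpow_const_add_norm_sq hc, ?_⟩
  have hg₀ := hg.self_of_nhds
  have hS : 0 < c + ‖g t₀‖ ^ 2 := by positivity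
  have hpow := (hg₀.norm_sq.const_add c).rpow_const (p := p / 2 - 1) (Or.inl hS.ne')
  refine ((hpow.const_mul p).mul (hg₀.inner ℝ hg')).congr_deriv ?_
  rw [show p / 2 - 1 - 1 = p / 2 - 2 by ring, show p / 2 - 1 = p / 2 - 2 + 1 by ring,
    Real.rpow_add_one hS.ne', real_inner_self_eq_norm_sq]
  ring

theorem HasDerivAt.clm_comp_line {h : ℂ → ℂ} {h' z v : ℂ} {t : ℝ} (L : ℂ →L[ℝ] E)
    (hh : HasDerivAt h h' (z + t * v)) :
    HasDerivAt (fun s : ℝ => L (h (z + s * v))) (L (h' * v)) t := by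
  have hline : HasDerivAt (fun w : ℂ => z + w * v) v (t : ℂ) := by
    simpa using ((hasDerivAt_id (t : ℂ)).mul_const v).const_add z
  have := (L.hasFDerivAt.comp_hasDerivAt t ((hh.comp (t : ℂ) hline).comp_ofReal))
  simpa [Function.comp_def, mul_comm v] using this

theorem AnalyticAt.hasSecondDerivAt_rpow_const_add_norm_sq_line {f : ℂ → ℂ} {z : ℂ}
    (hf : AnalyticAt ℂ f z) (L : ℂ →L[ℝ] E) (v : ℂ) (hc : 0 < c) :
    HasSecondDerivAt (fun t : ℝ => (c + ‖L (f (z + t * v))‖ ^ 2) ^ (p / 2))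
      (p * (c + ‖L (f z)‖ ^ 2) ^ (p / 2 - 2) *
        ((p - 2) * ⟪L (f z), L (deriv f z * v)⟫ ^ 2 + (c + ‖L (f z)‖ ^ 2) *
          (‖L (deriv f z * v)‖ ^ 2 + ⟪L (f z), L (deriv (deriv f) z * v * v)⟫))) 0 := by
  have hline : Tendsto (fun t : ℝ => z + t * v) (𝓝 0) (𝓝 z) := by
    have hcont : Continuous fun t : ℝ => z + t * v := by fun_prop
    simpa using hcont.tendsto 0
  have hg : ∀ᶠ t : ℝ in 𝓝 0,
      HasDerivAt (fun s : ℝ => L (f (z + s * v))) (L (deriv f (z + (t : ℂ) * v) * v)) t :=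
    (hline.eventually hf.eventually_analyticAt).mono fun t ht =>
      ht.differentiableAt.hasDerivAt.clm_comp_line L
  have hg' : HasDerivAt (fun t : ℝ => L (deriv f (z + t * v) * v))
      (L (deriv (deriv f) z * v * v)) 0 := by
    have := hf.deriv.differentiableAt.hasDerivAt.mul_const v
    exact HasDerivAt.clm_comp_line (h := fun w => deriv f w * v) L (by simpa using this)
  simpa using hasSecondDerivAt_rpow_const_add_norm_sq (p := p) hc hg hg'

end RpowNormSq

theorem planarLaplacian_eq_of_hasSecondDerivAt {G : ℂ → ℝ} {z : ℂ} {Dx Dy : ℝ}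
    (hx : HasSecondDerivAt (fun x : ℝ => G (z + x)) Dx 0)
    (hy : HasSecondDerivAt (fun y : ℝ => G (z + y * I)) Dy 0) :
    planarLaplacian G z = Dx + Dy := by
  rw [planarLaplacian, hx.deriv_deriv, hy.deriv_deriv]

section Holomorphic

variable {f : ℂ → ℂ} {z : ℂ} {c p : ℝ}

theorem AnalyticAt.planarLaplacian_rpow_const_add_norm_sq (hf : AnalyticAt ℂ f z) (hc : 0 < c) :
    planarLaplacian (fun w => (c + ‖f w‖ ^ 2) ^ (p / 2)) z =
      p * (c + ‖f z‖ ^ 2) ^ (p / 2 - 2) * (2 * c + p * ‖f z‖ ^ 2) * ‖deriv f z‖ ^ 2 := by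
  have hx := hf.hasSecondDerivAt_rpow_const_add_norm_sq_line (ContinuousLinearMap.id ℝ ℂ) 1 hc
    (p := p)
  have hy := hf.hasSecondDerivAt_rpow_const_add_norm_sq_line (ContinuousLinearMap.id ℝ ℂ) I hc
    (p := p)
  simp only [ContinuousLinearMap.id_apply, mul_one] at hx hy
  rw [planarLaplacian_eq_of_hasSecondDerivAt hx hy]
  simp only [Complex.inner, Complex.sq_norm, normSq_apply, mul_re, mul_im, conj_re, conj_im,
    I_re, I_im]
  ring

theorem AnalyticAt.planarLaplacian_rpow_const_add_re_sq_add_rpow_const_add_im_sq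
    (hf : AnalyticAt ℂ f z) (hc : 0 < c) :
    planarLaplacian (fun w => (c + (f w).re ^ 2) ^ (p / 2) + (c + (f w).im ^ 2) ^ (p / 2)) z =
      p * ‖deriv f z‖ ^ 2 * ((c + (f z).re ^ 2) ^ (p / 2 - 2) * (c + (p - 1) * (f z).re ^ 2) +
        (c + (f z).im ^ 2) ^ (p / 2 - 2) * (c + (p - 1) * (f z).im ^ 2)) := by
  have hre (v : ℂ) := hf.hasSecondDerivAt_rpow_const_add_norm_sq_line reCLM v hc (p := p)
  have him (v : ℂ) := hf.hasSecondDerivAt_rpow_const_add_norm_sq_line imCLM v hc (p := p)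
  have hx := (hre 1).add (him 1)
  have hy := (hre I).add (him I)
  simp only [reCLM_apply, imCLM_apply, Real.norm_eq_abs, sq_abs, mul_one] at hx hy
  rw [planarLaplacian_eq_of_hasSecondDerivAt hx hy]
  simp only [Real.inner_apply, Complex.sq_norm, normSq_apply, mul_re, mul_im, I_re, I_im]
  ring

end Holomorphic

theorem re_im_laplacian_factor_le {p q ε : ℝ} (hp : 4 ≤ p) (hq : q = p / (p - 1))
    (hε : 0 < ε) (w : ℂ) :
    (ε + w.re ^ 2) ^ (p / 2 - 2) * (ε + (p - 1) * w.re ^ 2) +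
        (ε + w.im ^ 2) ^ (p / 2 - 2) * (ε + (p - 1) * w.im ^ 2) ≤
      (p - 1) / p * ((q * ε + ‖w‖ ^ 2) ^ (p / 2 - 2) * (2 * (q * ε) + p * ‖w‖ ^ 2)) := by
  have hp1 : 0 < p - 1 := by linarith
  have hq1 : 1 ≤ q := by rw [hq, le_div_iff₀ hp1]; linarith
  have hnorm : ‖w‖ ^ 2 = w.re ^ 2 + w.im ^ 2 := by rw [Complex.sq_norm, normSq_apply]; ring
  set S := q * ε + ‖w‖ ^ 2
  have hk : 0 ≤ p / 2 - 2 := by linarith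
  have hre : (ε + w.re ^ 2) ^ (p / 2 - 2) ≤ S ^ (p / 2 - 2) :=
    Real.rpow_le_rpow (by positivity) (by nlinarith [sq_nonneg w.im]) hk
  have him : (ε + w.im ^ 2) ^ (p / 2 - 2) ≤ S ^ (p / 2 - 2) :=
    Real.rpow_le_rpow (by positivity) (by nlinarith [sq_nonneg w.re]) hk
  have hrhs : (p - 1) / p * (S ^ (p / 2 - 2) * (2 * (q * ε) + p * ‖w‖ ^ 2)) =
      S ^ (p / 2 - 2) * ((ε + (p - 1) * w.re ^ 2) + (ε + (p - 1) * w.im ^ 2)) := by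
    rw [hq, hnorm]
    field_simp
    ring
  have hp1re : 0 ≤ ε + (p - 1) * w.re ^ 2 := by positivity
  have hp1im : 0 ≤ ε + (p - 1) * w.im ^ 2 := by positivity
  rw [hrhs, mul_add (S ^ (p / 2 - 2))]
  exact add_le_add (mul_le_mul_of_nonneg_right hre hp1re) (mul_le_mul_of_nonneg_right him hp1im)

/-- For `f = u+iv` holomorphic on the unit disk, `p ≥ 4`, `q = p/(p-1)`, `ε > 0`, with
`F_ε = (qε + |f|²)^{p/2}`, `U_ε = (ε + u²)^{p/2}`, `V_ε = (ε + v²)^{p/2}`: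
`Δ(U_ε + V_ε) ≤ ((p-1)/p) Δ F_ε` pointwise on the disk. -/
theorem laplacian_comparison_ge_four (f : ℂ → ℂ)
    (hf : DifferentiableOn ℂ f (ball (0 : ℂ) 1))
    (p q : ℝ) (hp : 4 ≤ p) (hq : q = p / (p - 1)) (ε : ℝ) (hε : 0 < ε) :
    ∀ z ∈ ball (0 : ℂ) 1,
      planarLaplacian (fun w => (ε + (f w).re ^ 2) ^ (p / 2) + (ε + (f w).im ^ 2) ^ (p / 2)) z ≤
        (p - 1) / p *
          planarLaplacian (fun w => (q * ε + ‖f w‖ ^ 2) ^ (p / 2)) z := by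
  intro z hz
  have hfz : AnalyticAt ℂ f z := hf.analyticAt (isOpen_ball.mem_nhds hz)
  have hqε : 0 < q * ε := by
    have : 0 < q := by rw [hq]; exact div_pos (by linarith) (by linarith)
    positivity
  rw [hfz.planarLaplacian_rpow_const_add_re_sq_add_rpow_const_add_im_sq hε,
    hfz.planarLaplacian_rpow_const_add_norm_sq hqε]
  calc _ ≤ p * ‖deriv f z‖ ^ 2 * ((p - 1) / p * ((q * ε + ‖f z‖ ^ 2) ^ (p / 2 - 2) *
          (2 * (q * ε) + p * ‖f z‖ ^ 2))) := by
        gcongr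
        exact re_im_laplacian_factor_le hp hq hε (f z)
    _ = _ := by ring
end

section
/- For all real $r > 0$, $t > 0$, $\epsilon > 0$, $p \geq 4$, and all $s \in \mathbb{R}$ with $s$ a multiple of $\pi/4$ at which the relevant expression is stationary, the function $Q(s) = \frac{(\epsilon + r^2\cos^2 s)^{p/2-2}(\epsilon + (p-1)r^2\cos^2 s) + (\epsilon + r^2\sin^2 s)^{p/2-2}(\epsilon + (p-1)r^2\sin^2 s)}{(2\epsilon + (p-1)r^2)\left(\frac{\epsilon p}{p-1} + r^2\right)^{p/2-2}}$ satisfies $Q(\pi/4) = 2^{2-p/2}\left(\frac{p-1+pt}{(p-1)(1+2t)}\right)^{2-p/2} \leq 1$ where $\epsilon = tr^2$, and $Q(\pi/4) \geq 1$ when $1 < p \leq 4$. -/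
/-! At `s = π/4` we have `cos² s = sin² s = 1/2`, so both summands of the numerator equal
`a^(p/2-2) (ε + (p-1) r²/2)` with `a = r² (1+2t)/2`. Their sum cancels the factor
`2ε + (p-1) r²` of the denominator, leaving `(b/a)^(2-p/2)` with `b = r² (p-1+pt)/(p-1)`.
Since `b/a ≥ 1`, the sign of the exponent `2 - p/2` decides on which side of `1` the value lies. -/

open Real

lemma cos_sq_pi_div_four : cos (π / 4) ^ 2 = 1 / 2 := by
  rw [cos_pi_div_four, div_pow, sq_sqrt zero_le_two]
  norm_num

lemma sin_sq_pi_div_four : sin (π / 4) ^ 2 = 1 / 2 := by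
  rw [sin_pi_div_four, div_pow, sq_sqrt zero_le_two]
  norm_num

lemma rpow_mul_div_mul_rpow {a b c : ℝ} (ha : 0 < a) (hb : 0 < b) (hc : c ≠ 0) (x : ℝ) :
    a ^ x * c / (c * b ^ x) = (b / a) ^ (-x) := by
  rw [mul_comm c, mul_div_mul_right _ _ hc, rpow_neg (div_pos hb ha).le,
    div_rpow hb.le ha.le, inv_div]

lemma one_le_two_mul_div {p t : ℝ} (hp : 1 < p) (ht : 0 ≤ t) :
    1 ≤ 2 * ((p - 1 + p * t) / ((p - 1) * (1 + 2 * t))) := by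
  rw [← mul_div_assoc, one_le_div (by nlinarith)]
  nlinarith

lemma ratio_at_half_eq_rpow {r t p : ℝ} (hr : r ≠ 0) (ht : 0 ≤ t) (hp : 1 < p) :
    ((t * r ^ 2 + r ^ 2 * (1 / 2)) ^ (p / 2 - 2) * (t * r ^ 2 + (p - 1) * r ^ 2 * (1 / 2)) +
        (t * r ^ 2 + r ^ 2 * (1 / 2)) ^ (p / 2 - 2) * (t * r ^ 2 + (p - 1) * r ^ 2 * (1 / 2))) /
      ((2 * (t * r ^ 2) + (p - 1) * r ^ 2) * (t * r ^ 2 * p / (p - 1) + r ^ 2) ^ (p / 2 - 2)) =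
      (2 * ((p - 1 + p * t) / ((p - 1) * (1 + 2 * t)))) ^ (2 - p / 2) := by
  have hp1 : 0 < p - 1 := sub_pos.mpr hp
  have hr2 : 0 < r ^ 2 := by positivity
  have ha : 0 < t * r ^ 2 + r ^ 2 * (1 / 2) := by positivity
  have hb : 0 < t * r ^ 2 * p / (p - 1) + r ^ 2 := by
    have : 0 ≤ t * r ^ 2 * p / (p - 1) := div_nonneg (by nlinarith [mul_nonneg ht hr2.le]) hp1.le
    linarith
  have hc : 2 * (t * r ^ 2) + (p - 1) * r ^ 2 ≠ 0 := by nlinarith [mul_nonneg ht hr2.le]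
  have hsum : ∀ y : ℝ, y * (t * r ^ 2 + (p - 1) * r ^ 2 * (1 / 2)) +
      y * (t * r ^ 2 + (p - 1) * r ^ 2 * (1 / 2)) = y * (2 * (t * r ^ 2) + (p - 1) * r ^ 2) :=
    fun y => by ring
  rw [hsum, rpow_mul_div_mul_rpow ha hb hc, neg_sub]
  congr 1
  field_simp
  ring

/-- The ratio `Q(s) = Δ(U_ε+V_ε) / ((p-1)/p · Δ F_ε)` at a point where `f = r e^{is}`,
with `ε = t r²`, evaluated at the stationary point `s = π/4`: it equals
`2^{2-p/2} ((p-1+pt)/((p-1)(1+2t)))^{2-p/2}`, which is `≤ 1` for `p ≥ 4` and `≥ 1` for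
`1 < p ≤ 4`. -/
theorem Q_at_pi_div_four (r t p : ℝ) (hr : 0 < r) (ht : 0 < t) (hp : 1 < p)
    (ε : ℝ) (hε : ε = t * r ^ 2)
    (Q : ℝ → ℝ)
    (hQ : ∀ s : ℝ, Q s =
      ((ε + r ^ 2 * cos s ^ 2) ^ (p / 2 - 2) * (ε + (p - 1) * r ^ 2 * cos s ^ 2) +
        (ε + r ^ 2 * sin s ^ 2) ^ (p / 2 - 2) * (ε + (p - 1) * r ^ 2 * sin s ^ 2)) /
      ((2 * ε + (p - 1) * r ^ 2) * (ε * p / (p - 1) + r ^ 2) ^ (p / 2 - 2))) :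
    Q (π / 4) =
      (2 : ℝ) ^ (2 - p / 2) * ((p - 1 + p * t) / ((p - 1) * (1 + 2 * t))) ^ (2 - p / 2) ∧
    (4 ≤ p → Q (π / 4) ≤ 1) ∧ (p ≤ 4 → 1 ≤ Q (π / 4)) := by
  have hQ_eq : Q (π / 4) = (2 * ((p - 1 + p * t) / ((p - 1) * (1 + 2 * t)))) ^ (2 - p / 2) := by
    rw [hQ, cos_sq_pi_div_four, sin_sq_pi_div_four, hε]
    exact ratio_at_half_eq_rpow hr.ne' ht.le hp
  have hone := one_le_two_mul_div hp ht.le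
  refine ⟨?_, fun hp4 => ?_, fun hp4 => ?_⟩
  · rw [hQ_eq, mul_rpow zero_le_two (by linarith)]
  · exact hQ_eq ▸ rpow_le_one_of_one_le_of_nonpos hone (by linarith)
  · exact hQ_eq ▸ one_le_rpow hone (by linarith)
end

section
/- For $p \geq 4$ and all real $t > 0$, the inequality $\frac{t^{p/2-1}}{p-1+2t} + \frac{(1+t)^{p/2-2}(p-1+t)}{p-1+2t} \leq \left(1 + t + \frac{t}{p-1}\right)^{p/2-2}$ holds. -/
/-! The left side is the average of `t ^ (p/2-2)` and `(1+t) ^ (p/2-2)` with weights `t` and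
`p-1+t`; both bases are at most `1 + t + t/(p-1)` and the exponent `p/2-2` is nonnegative. -/

open Real

theorem mul_add_mul_div_add_le {α : Type*} [Field α] [LinearOrder α] [IsStrictOrderedRing α]
    {a b c u v : α} (ha : a ≤ c) (hb : b ≤ c) (hu : 0 ≤ u) (hv : 0 ≤ v) (huv : 0 < u + v) :
    (a * u + b * v) / (u + v) ≤ c := by
  rw [div_le_iff₀ huv]
  nlinarith [mul_le_mul_of_nonneg_right ha hu, mul_le_mul_of_nonneg_right hb hv]

/-- For `p ≥ 4` and `t > 0`:
`t^{p/2-1}/(p-1+2t) + (1+t)^{p/2-2}(p-1+t)/(p-1+2t) ≤ (1 + t + t/(p-1))^{p/2-2}`. -/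
theorem elementary_ineq_p_ge_four (p t : ℝ) (hp : 4 ≤ p) (ht : 0 < t) :
    t ^ (p / 2 - 1) / (p - 1 + 2 * t) +
      (1 + t) ^ (p / 2 - 2) * (p - 1 + t) / (p - 1 + 2 * t) ≤
    (1 + t + t / (p - 1)) ^ (p / 2 - 2) := by
  have hq : 0 ≤ p / 2 - 2 := by linarith
  have hs : 0 ≤ t / (p - 1) := div_nonneg ht.le (by linarith)
  have hpow : t ^ (p / 2 - 1) = t ^ (p / 2 - 2) * t := by
    rw [← rpow_add_one ht.ne']; ring_nf
  have hden : p - 1 + 2 * t = t + (p - 1 + t) := by ring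
  rw [hpow, ← add_div, hden]
  exact mul_add_mul_div_add_le (rpow_le_rpow ht.le (by linarith) hq)
    (rpow_le_rpow (by linarith) (by linarith) hq) ht.le (by linarith) (by linarith)
end

section
/- For $2 \leq p \leq 4$ and all real $t > 0$, the inequality $\frac{t^{p/2-1}}{p-1+2t} + \frac{(1+t)^{p/2-2}(p-1+t)}{p-1+2t} \geq \left(\frac{p-1+pt}{p-1}\right)^{p/2-2}$ holds. -/
/-! With `α = p/2 - 2 ≤ 0` and weights `a = t/(p-1+2t)`, `b = (p-1+t)/(p-1+2t)` summing to one,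
the right-hand side is `a t^α + b (1+t)^α`. By convexity of `x ↦ x^α` this dominates `m^α`
for the mean `m = a t + b (1+t)`, and `m ≤ (p-1+pt)/(p-1)` since `x ↦ x^α` is antitone. -/

open Real Set

theorem Real.convexOn_rpow_of_nonpos {α : ℝ} (hα : α ≤ 0) :
    ConvexOn ℝ (Ioi 0) fun x : ℝ ↦ x ^ α := by
  refine convexOn_of_hasDerivWithinAt2_nonneg (convex_Ioi 0)
    (f' := fun x ↦ α * x ^ (α - 1)) (f'' := fun x ↦ α * ((α - 1) * x ^ (α - 1 - 1)))
    (fun x hx ↦ (continuousAt_rpow_const x α (Or.inl (ne_of_gt hx))).continuousWithinAt)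
    ?_ ?_ ?_ <;> rw [interior_Ioi] <;> intro x hx
  · exact (hasDerivAt_rpow_const (Or.inl (ne_of_gt hx))).hasDerivWithinAt
  · exact ((hasDerivAt_rpow_const (Or.inl (ne_of_gt hx))).const_mul α).hasDerivWithinAt
  · have hx_pow : 0 ≤ x ^ (α - 1 - 1) := (rpow_pos_of_pos hx _).le
    rw [← mul_assoc]
    exact mul_nonneg (mul_nonneg_of_nonpos_of_nonpos hα (by linarith)) hx_pow

/-- For `2 ≤ p ≤ 4` and `t > 0`:
`t^{p/2-1}/(p-1+2t) + (1+t)^{p/2-2}(p-1+t)/(p-1+2t) ≥ ((p-1+pt)/(p-1))^{p/2-2}`. -/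
theorem elementary_ineq_p_le_four (p t : ℝ) (hp2 : 2 ≤ p) (hp4 : p ≤ 4) (ht : 0 < t) :
    ((p - 1 + p * t) / (p - 1)) ^ (p / 2 - 2) ≤
      t ^ (p / 2 - 1) / (p - 1 + 2 * t) +
        (1 + t) ^ (p / 2 - 2) * (p - 1 + t) / (p - 1 + 2 * t) := by
  set α := p / 2 - 2 with hα_def
  have hα : α ≤ 0 := by rw [hα_def]; linarith
  have hp1 : 0 < p - 1 := by linarith
  have hd : 0 < p - 1 + 2 * t := by linarith
  set a := t / (p - 1 + 2 * t) with ha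
  set b := (p - 1 + t) / (p - 1 + 2 * t) with hb
  have hab : a + b = 1 := by rw [ha, hb]; field_simp; ring
  have hmean : a * t + b * (1 + t) = (2 * t ^ 2 + p * t + (p - 1)) / (p - 1 + 2 * t) := by
    rw [ha, hb]; field_simp; ring
  have hmean_pos : 0 < a * t + b * (1 + t) := by rw [hmean]; positivity
  have hmean_le : a * t + b * (1 + t) ≤ (p - 1 + p * t) / (p - 1) := by
    rw [hmean, div_le_div_iff₀ hd hp1]
    nlinarith
  have jensen := (convexOn_rpow_of_nonpos hα).2 (x := t) (y := 1 + t) (mem_Ioi.2 ht)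
    (mem_Ioi.2 (by linarith)) (by positivity) (by positivity) hab
  have ht_pow : t ^ (p / 2 - 1) = t * t ^ α := by
    rw [show p / 2 - 1 = 1 + α by ring, rpow_add ht, rpow_one]
  calc ((p - 1 + p * t) / (p - 1)) ^ α ≤ (a * t + b * (1 + t)) ^ α :=
        rpow_le_rpow_of_nonpos hmean_pos hmean_le hα
    _ ≤ a * t ^ α + b * (1 + t) ^ α := jensen
    _ = t ^ (p / 2 - 1) / (p - 1 + 2 * t) + (1 + t) ^ α * (p - 1 + t) / (p - 1 + 2 * t) := by
        rw [ht_pow]; ring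
end

section
/- The equation $\left(\frac{p}{p-1}\right)^{1/p} = 2^{-1/p}\frac{1}{\sin(\pi/(2p))}$ has a unique solution $p_1$ in $[2, \infty)$, and moreover $2^{-1/p}\frac{1}{\cos(\pi/(2p))} \leq \left(\frac{p}{p-1}\right)^{1/p}$ for all $p \geq 4$. -/
/-!
`(p/(p-1))^{1/p}` decreases strictly for `p > 1`, while `2^{-1/p}/sin(π/(2p))` increases strictly
for `p ≥ 1`. At `p = 2` the first is the larger one (it is `≥ 1`, the second is `1`), at `p = 4` the
second (as `sin(π/8) ≤ π/8 ≤ 1/2`), so the intermediate value theorem gives exactly one crossing.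

For the cosine constant, `cos x ≥ 1 - x²/2` and Bernoulli's inequality give
`cos(π/(2p))^p ≥ 1 - π²/(8p) ≥ 1/2` once `p ≥ π²/4`, hence `2^{-1/p}/cos(π/(2p)) ≤ 1`,
while `(p/(p-1))^{1/p} ≥ 1`.
-/

open Real Set

theorem existsUnique_eq_of_strictAntiOn_of_strictMonoOn {f g : ℝ → ℝ} {a b : ℝ} (hab : a ≤ b)
    (hf : StrictAntiOn f (Ici a)) (hg : StrictMonoOn g (Ici a))
    (hfc : ContinuousOn f (Icc a b)) (hgc : ContinuousOn g (Icc a b))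
    (ha : g a ≤ f a) (hb : f b ≤ g b) : ∃! x, x ∈ Ici a ∧ f x = g x := by
  obtain ⟨c, hc, hzero⟩ : ∃ c ∈ Icc a b, g c - f c = 0 :=
    intermediate_value_Icc hab (hgc.sub hfc) ⟨sub_nonpos.2 ha, sub_nonneg.2 hb⟩
  have hca : c ∈ Ici a := hc.1
  refine ⟨c, ⟨hca, (sub_eq_zero.1 hzero).symm⟩, fun x ⟨hx, hfx⟩ => ?_⟩
  by_contra hne
  rcases lt_or_gt_of_ne hne with h | h
  · linarith [hf hx hca h, hg hx hca h]
  · linarith [hf hca hx h, hg hca hx h]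

namespace ConstantsComparison

-- `p`-th roots of the constants `p/(p-1)`, `R_p^p/2` and `L_p^p/2`.
noncomputable def conjRoot (p : ℝ) : ℝ := (p / (p - 1)) ^ (1 / p)

noncomputable def sinRoot (p : ℝ) : ℝ := 2 ^ (-(1 / p)) * (1 / sin (π / (2 * p)))

noncomputable def cosRoot (p : ℝ) : ℝ := 2 ^ (-(1 / p)) * (1 / cos (π / (2 * p)))

theorem one_lt_div_sub_one {p : ℝ} (hp : 1 < p) : 1 < p / (p - 1) := by
  rw [lt_div_iff₀ (by linarith)]
  linarith

theorem strictAntiOn_conjRoot : StrictAntiOn conjRoot (Ioi 1) := by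
  intro a (ha : 1 < a) b (hb : 1 < b) hab
  have hbase : b / (b - 1) < a / (a - 1) := by
    rw [div_lt_div_iff₀ (by linarith) (by linarith)]
    nlinarith
  calc conjRoot b < (b / (b - 1)) ^ (1 / a) :=
        rpow_lt_rpow_of_exponent_lt (one_lt_div_sub_one hb)
          (one_div_lt_one_div_of_lt (by linarith) hab)
    _ < conjRoot a := rpow_lt_rpow (by linarith [one_lt_div_sub_one hb]) hbase (by positivity)

theorem continuousOn_conjRoot : ContinuousOn conjRoot (Ioi 1) := by
  refine ContinuousOn.rpow (by fun_prop (disch := intro x (hx : 1 < x); linarith)) ?_ ?_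
  · fun_prop (disch := intro x (hx : 1 < x); linarith)
  · intro x (hx : 1 < x)
    exact Or.inl (by linarith [one_lt_div_sub_one hx])

theorem one_le_conjRoot {p : ℝ} (hp : 1 < p) : 1 ≤ conjRoot p :=
  one_le_rpow (one_lt_div_sub_one hp).le (by positivity)

theorem sin_pi_div_two_mul_pos {p : ℝ} (hp : 1 / 2 < p) : 0 < sin (π / (2 * p)) := by
  apply sin_pos_of_pos_of_lt_pi (by positivity)
  rw [div_lt_iff₀ (by linarith)]
  nlinarith [pi_pos]

theorem strictMonoOn_sinRoot : StrictMonoOn sinRoot (Ici 1) := by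
  intro a (ha : 1 ≤ a) b (hb : 1 ≤ b) hab
  have hsin : sin (π / (2 * b)) < sin (π / (2 * a)) := by
    apply sin_lt_sin_of_lt_of_le_pi_div_two
    · linarith [pi_pos, show 0 ≤ π / (2 * b) by positivity]
    · rw [div_le_div_iff₀ (by linarith) (by norm_num)]
      nlinarith [pi_pos]
    · exact div_lt_div_of_pos_left pi_pos (by linarith) (by linarith)
  have hsa := sin_pi_div_two_mul_pos (show 1 / 2 < a by linarith)
  have hsb := sin_pi_div_two_mul_pos (show 1 / 2 < b by linarith)
  refine mul_lt_mul'' ?_ (one_div_lt_one_div_of_lt hsb hsin) (by positivity) (by positivity)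
  exact rpow_lt_rpow_of_exponent_lt one_lt_two
    (neg_lt_neg (one_div_lt_one_div_of_lt (by linarith) hab))

theorem continuousOn_sinRoot : ContinuousOn sinRoot (Ioi (1 / 2)) := by
  refine ContinuousOn.mul ?_
    (continuousOn_const.div ?_ fun x hx => (sin_pi_div_two_mul_pos hx).ne')
  · exact continuousOn_const.rpow (by fun_prop (disch := intro x (hx : 1 / 2 < x); linarith))
      fun _ _ => Or.inl two_ne_zero
  · fun_prop (disch := intro x (hx : 1 / 2 < x); linarith)

theorem sinRoot_two : sinRoot 2 = 1 := by
  rw [sinRoot, show π / (2 * 2) = π / 4 by ring, sin_pi_div_four, rpow_neg zero_le_two,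
    ← sqrt_eq_rpow]
  field_simp
  exact (sq_sqrt zero_le_two).symm

theorem conjRoot_four_le_sinRoot_four : conjRoot 4 ≤ sinRoot 4 := by
  have hsin : sin (π / (2 * 4)) ≤ 1 / 2 := by
    linarith [sin_le (show 0 ≤ π / (2 * 4) by positivity), pi_le_four]
  calc conjRoot 4 ≤ 2 ^ (1 / 4 : ℝ) := rpow_le_rpow (by norm_num) (by norm_num) (by norm_num)
    _ ≤ 2 ^ (-(1 / 4) + 1 : ℝ) := rpow_le_rpow_of_exponent_le one_le_two (by norm_num)
    _ = 2 ^ (-(1 / 4 : ℝ)) * 2 := rpow_add_one two_ne_zero _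
    _ ≤ sinRoot 4 := by
      rw [sinRoot]
      gcongr
      rwa [le_one_div (by norm_num) (sin_pi_div_two_mul_pos (by norm_num))]

theorem one_sub_pi_sq_div_le_cos_rpow {p : ℝ} (hp : 2 ≤ p) :
    1 - π ^ 2 / (8 * p) ≤ cos (π / (2 * p)) ^ p := by
  set x := π / (2 * p) with hx_def
  have hx : x ^ 2 / 2 ≤ 1 := by
    have : x ≤ 1 := by
      rw [div_le_one (by linarith)]
      linarith [pi_le_four]
    nlinarith [show 0 ≤ x by positivity]
  calc 1 - π ^ 2 / (8 * p) = 1 + p * -(x ^ 2 / 2) := by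
        rw [hx_def]
        field_simp
        ring
    _ ≤ (1 + -(x ^ 2 / 2)) ^ p := one_add_mul_self_le_rpow_one_add (by linarith) (by linarith)
    _ ≤ cos x ^ p :=
      rpow_le_rpow (by linarith) (by linarith [one_sub_sq_div_two_le_cos (x := x)]) (by linarith)

theorem cosRoot_le_one {p : ℝ} (hp : π ^ 2 / 4 ≤ p) : cosRoot p ≤ 1 := by
  have hp2 : 2 ≤ p := by nlinarith [pi_gt_three]
  have hcos : 0 < cos (π / (2 * p)) := by
    apply cos_pos_of_mem_Ioo ⟨by linarith [pi_pos, show 0 < π / (2 * p) by positivity], ?_⟩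
    rw [div_lt_div_iff₀ (by linarith) (by norm_num)]
    nlinarith [pi_pos]
  have hhalf : 2⁻¹ ≤ cos (π / (2 * p)) ^ p := by
    refine le_trans ?_ (one_sub_pi_sq_div_le_cos_rpow hp2)
    rw [le_sub_comm, div_le_iff₀ (by linarith)]
    linarith
  rwa [cosRoot, mul_one_div, div_le_one hcos, rpow_neg zero_le_two, ← inv_rpow zero_le_two,
    one_div, rpow_inv_le_iff_of_pos (by norm_num) hcos.le (by linarith)]

end ConstantsComparison

open ConstantsComparison in
/-- The equation `(p/(p-1))^{1/p} = 2^{-1/p}/sin(π/(2p))` has a unique solution on `[2, ∞)`,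
and `2^{-1/p}/cos(π/(2p)) ≤ (p/(p-1))^{1/p}` for all `p ≥ 4`. -/
theorem constants_comparison :
    (∃! p : ℝ, p ∈ Set.Ici (2 : ℝ) ∧
      (p / (p - 1)) ^ (1 / p) = (2 : ℝ) ^ (-(1 / p)) * (1 / Real.sin (π / (2 * p)))) ∧
    ∀ p : ℝ, 4 ≤ p →
      (2 : ℝ) ^ (-(1 / p)) * (1 / Real.cos (π / (2 * p))) ≤ (p / (p - 1)) ^ (1 / p) := by
  refine ⟨?_, fun p hp => ?_⟩
  · refine existsUnique_eq_of_strictAntiOn_of_strictMonoOn (f := conjRoot) (g := sinRoot)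
      (by norm_num : (2 : ℝ) ≤ 4)
      (strictAntiOn_conjRoot.mono fun x (hx : 2 ≤ x) => show 1 < x by linarith)
      (strictMonoOn_sinRoot.mono fun x (hx : 2 ≤ x) => show 1 ≤ x by linarith)
      (continuousOn_conjRoot.mono fun x hx => show 1 < x by linarith [hx.1])
      (continuousOn_sinRoot.mono fun x hx => show 1 / 2 < x by linarith [hx.1])
      ?_ conjRoot_four_le_sinRoot_four
    rw [sinRoot_two]
    exact one_le_conjRoot one_lt_two
  · calc cosRoot p ≤ 1 := cosRoot_le_one (by nlinarith [pi_le_four, pi_pos])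
      _ ≤ conjRoot p := one_le_conjRoot (by linarith)
end
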